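/- arXiv:1701.08578 — 2 statements merged into one kernel-verified Lean document; each statement's English description precedes it below -/
import Mathlib

section
/- Suppose a function a : ℕ × (ℕ∪{0}) → ℝ satisfies the generalized subadditive condition with constant C. Then for every integer k ≥ 1 there exists a sequence ε(n) of non-negative reals with ε(n) → 0 as n → ∞ (depending only on k and C) such that (1/n)·a(n,0) ≤ (1/(kn))·∑_{j=0}^{n−1} a(k,j) + ε(n) whenever 0 < k < n. -/
/-!
Each of the `k` values `a (m+1) 0, …, a (m+k) 0` dominates `a (m+k) 0` up to `k C`, since
`a (p+d) 0 ≤ a d p + a p 0`. Sliding this window one step to the right changes its sum by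
`a (m+k+1) 0 - a (m+1) 0 ≤ a k (m+1)`, so telescoping from the window `1, …, k` gives
`k · a n 0 ≤ ∑_{j<n} a k j + 3 k² C`; dividing by `k n` yields `ε n = 3 k |C| / n`.
-/

open Filter Topology

/-- A function `a : ℕ × (ℕ ∪ {0}) → ℝ` (encoded with first argument required to be `≥ 1`)
satisfies the *generalized subadditive condition* with constant `C` if
`a (n₁+n₂) 0 ≤ a n₁ n₂ + a n₂ 0` and `|a n₁ n₂| ≤ n₁ * C`. -/
def GenSubadditive (a : ℕ → ℕ → ℝ) (C : ℝ) : Prop :=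
  (∀ n₁ n₂ : ℕ, 1 ≤ n₁ → 1 ≤ n₂ → a (n₁ + n₂) 0 ≤ a n₁ n₂ + a n₂ 0) ∧
    (∀ n₁ n₂ : ℕ, 1 ≤ n₁ → |a n₁ n₂| ≤ (n₁ : ℝ) * C)

open Finset

theorem Finset.sum_range_shift_le {M : Type*} [AddCommMonoid M] [PartialOrder M]
    [IsOrderedCancelAddMonoid M] {f g : ℕ → M} {k : ℕ} (h : ∀ m, f (m + k) ≤ g m + f m)
    (m : ℕ) : ∑ t ∈ range k, f (m + t) ≤ ∑ t ∈ range k, f t + ∑ j ∈ range m, g j := by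
  induction m with
  | zero => simp
  | succ m ih =>
    have hshift : ∑ t ∈ range k, f (m + 1 + t) + f m = ∑ t ∈ range k, f (m + t) + f (m + k) := by
      rw [← sum_range_succ, sum_range_succ']
      simp only [add_zero, Nat.add_right_comm m 1, add_assoc]
    refine le_of_add_le_add_right (a := f m) ?_
    calc ∑ t ∈ range k, f (m + 1 + t) + f m
        = ∑ t ∈ range k, f (m + t) + f (m + k) := hshift
      _ ≤ (∑ t ∈ range k, f t + ∑ j ∈ range m, g j) + (g m + f m) := add_le_add ih (h m)
      _ = ∑ t ∈ range k, f t + ∑ j ∈ range (m + 1), g j + f m := by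
        rw [sum_range_succ]; abel

theorem Finset.sum_range_succ_le_sum_range_add {f : ℕ → ℝ} {B : ℝ} (hf : ∀ j, -B ≤ f j)
    {k : ℕ} (hk : 1 ≤ k) (m : ℕ) :
    ∑ j ∈ range m, f (j + 1) ≤ ∑ j ∈ range (m + k), f j + k * B := by
  obtain ⟨k, rfl⟩ := Nat.exists_eq_add_of_le' hk
  have hsplit : ∑ j ∈ range (m + (k + 1)), f j
      = ∑ j ∈ range m, f (j + 1) + f 0 + ∑ x ∈ range k, f (m + 1 + x) := by
    rw [show m + (k + 1) = m + 1 + k by ring, sum_range_add, sum_range_succ']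
  have htail : k • (-B) ≤ ∑ x ∈ range k, f (m + 1 + x) := by
    simpa using card_nsmul_le_sum (range k) _ (-B) fun x _ => hf (m + 1 + x)
  rw [nsmul_eq_mul] at htail
  push_cast
  linarith [hf 0]

namespace GenSubadditive

variable {a : ℕ → ℕ → ℝ} {C : ℝ}

theorem const_nonneg (ha : GenSubadditive a C) : 0 ≤ C := by
  simpa using (abs_nonneg _).trans (ha.2 1 0 le_rfl)

theorem le_mul {n₁ : ℕ} (ha : GenSubadditive a C) (h₁ : 1 ≤ n₁) (n₂ : ℕ) :
    a n₁ n₂ ≤ n₁ * C :=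
  (le_abs_self _).trans (ha.2 n₁ n₂ h₁)

theorem neg_mul_le {n₁ : ℕ} (ha : GenSubadditive a C) (h₁ : 1 ≤ n₁) (n₂ : ℕ) :
    -(n₁ * C) ≤ a n₁ n₂ :=
  (abs_le.mp (ha.2 n₁ n₂ h₁)).1

theorem apply_zero_le_add_mul {p n k : ℕ} (ha : GenSubadditive a C) (hp : 1 ≤ p)
    (hpn : p ≤ n) (hnk : n ≤ p + k) : a n 0 ≤ a p 0 + k * C := by
  obtain ⟨d, rfl⟩ := Nat.exists_eq_add_of_le' hpn
  have hdC : (d : ℝ) * C ≤ k * C :=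
    mul_le_mul_of_nonneg_right (by exact_mod_cast (by omega : d ≤ k)) ha.const_nonneg
  rcases Nat.eq_zero_or_pos d with rfl | hd
  · simpa using hdC
  · calc a (d + p) 0 ≤ a d p + a p 0 := ha.1 d p hd hp
      _ ≤ d * C + a p 0 := by gcongr; exact ha.le_mul hd p
      _ ≤ a p 0 + k * C := by linarith

theorem natCast_mul_le_sum_add {k n : ℕ} (ha : GenSubadditive a C) (hk : 1 ≤ k) (hkn : k ≤ n) :
    k * a n 0 ≤ ∑ j ∈ range n, a k j + 3 * k ^ 2 * C := by
  obtain ⟨m, rfl⟩ := Nat.exists_eq_add_of_le' hkn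
  have hwindow : k * a (m + k) 0 ≤ ∑ t ∈ range k, a (m + t + 1) 0 + k * (k * C) := by
    have := sum_le_sum fun t (ht : t ∈ range k) =>
      ha.apply_zero_le_add_mul (n := m + k) (k := k) (p := m + t + 1) (by omega)
        (by have := mem_range.mp ht; omega) (by omega)
    simpa [sum_add_distrib] using this
  have hslide := sum_range_shift_le (f := fun t => a (t + 1) 0) (g := fun j => a k (j + 1))
    (k := k) (fun i => by simpa [add_right_comm, add_comm k] using ha.1 k (i + 1) hk (by omega)) m
  have hstart : ∑ t ∈ range k, a (t + 1) 0 ≤ k * (k * C) := by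
    refine (sum_le_sum fun t (ht : t ∈ range k) => ?_).trans_eq
      (by rw [sum_const, card_range, nsmul_eq_mul])
    calc a (t + 1) 0 ≤ (t + 1 : ℕ) * C := ha.le_mul (by omega) 0
      _ ≤ k * C := by
        gcongr
        · exact ha.const_nonneg
        · exact mem_range.mp ht
  have htail := sum_range_succ_le_sum_range_add (f := a k) (B := k * C) (ha.neg_mul_le hk) hk m
  linarith

end GenSubadditive

/-- If `a` satisfies the generalized subadditive condition with constant `C`,
then for every `k ≥ 1` there is a nonnegative sequence `ε n → 0`, depending only on `k` and `C`,
with `(1/n) a(n,0) ≤ (1/(kn)) ∑_{j=0}^{n-1} a(k,j) + ε n` whenever `0 < k < n`. -/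
theorem genSubadditive_average_bound (C : ℝ) (k : ℕ) (hk : 1 ≤ k) :
    ∃ ε : ℕ → ℝ, (∀ n, 0 ≤ ε n) ∧ Tendsto ε atTop (𝓝 0) ∧
      ∀ a : ℕ → ℕ → ℝ, GenSubadditive a C → ∀ n : ℕ, k < n →
        (n : ℝ)⁻¹ * a n 0 ≤
          ((k : ℝ) * (n : ℝ))⁻¹ * ∑ j ∈ Finset.range n, a k j + ε n := by
  refine ⟨fun n => 3 * k * |C| / n, fun n => by positivity,
    tendsto_const_div_atTop_nhds_zero_nat _, fun a ha n hkn => ?_⟩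
  have hn : (0 : ℝ) < n := by exact_mod_cast (Nat.zero_lt_of_lt hkn)
  have hk' : (0 : ℝ) < k := by exact_mod_cast hk
  calc (n : ℝ)⁻¹ * a n 0 = ((k : ℝ) * n)⁻¹ * (k * a n 0) := by field_simp
    _ ≤ ((k : ℝ) * n)⁻¹ * (∑ j ∈ range n, a k j + 3 * k ^ 2 * C) := by
      gcongr
      exact ha.natCast_mul_le_sum_add hk hkn.le
    _ = ((k : ℝ) * n)⁻¹ * ∑ j ∈ range n, a k j + 3 * k * C / n := by field_simp
    _ ≤ ((k : ℝ) * n)⁻¹ * ∑ j ∈ range n, a k j + 3 * k * |C| / n := by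
      gcongr
      exact le_abs_self C
end

section
/- For all non-singular linear maps A and B on ℝ^d and every t ≥ 0, the singular value function is submultiplicative: α^t(AB) ≤ α^t(A)·α^t(B). -/
/-!
Write `Pₖ(M) = σ₁(M)⋯σₖ(M)`. For `0 < t ≤ d` and `l = ⌈t⌉` one has
`αᵗ(M) = P_{l-1}(M)^{l-t} · P_l(M)^{t-l+1}`, a geometric interpolation between consecutive `Pₖ`,
and for `t > d` it is a power of `P_d`; so it suffices to prove Horn's inequality
`Pₖ(AB) ≤ Pₖ(A) Pₖ(B)`.

By the Courant–Fischer min-max principle (the sup defining `singVal`), restricting a map `T` to a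
subspace `V` can only decrease its singular values, and the first `k` do not drop when `V` is
spanned by the top `k` right singular vectors. Hence `Pₖ(T)` is the largest `k`-volume distortion
`normDet (T|V)` over `k`-dimensional `V`, and Horn's inequality follows by evaluating
`normDet (A ∘ B|V) = normDet (A|B(V)) · normDet (B|V)` on the top subspace `V` of `AB`.
-/

open Filter Topology MeasureTheory

/-- The `k`-th singular value (`k = 1, …, d`) of a matrix `M` acting on `ℝ^d`, via the
Courant–Fischer characterization: the supremum over `k`-dimensional subspaces `V` of the
minimal expansion factor of `M` on `V`. -/
noncomputable def singVal (d : ℕ) (M : Matrix (Fin d) (Fin d) ℝ) (k : ℕ) : ℝ :=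
  sSup {r : ℝ | ∃ V : Submodule ℝ (EuclideanSpace ℝ (Fin d)),
    Module.finrank ℝ V = k ∧ ∀ v ∈ V, r * ‖v‖ ≤ ‖Matrix.toEuclideanLin M v‖}

/-- The singular value function `αᵗ(M) = α₁⋯α_{l-1}·α_l^{t-l+1}` for `0 < t ≤ d`
(where `l = ⌈t⌉`), `α⁰(M) = 1`, and `αᵗ(M) = (α₁⋯α_d)^{t/d}` for `t > d`. -/
noncomputable def svf (d : ℕ) (M : Matrix (Fin d) (Fin d) ℝ) (t : ℝ) : ℝ :=
  if t = 0 then 1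
  else if t ≤ (d : ℝ) then
    (∏ k ∈ Finset.Icc 1 (⌈t⌉₊ - 1), singVal d M k) * singVal d M ⌈t⌉₊ ^ (t - (⌈t⌉₊ : ℝ) + 1)
  else (∏ k ∈ Finset.Icc 1 d, singVal d M k) ^ (t / (d : ℝ))

open Module Submodule

theorem Module.Basis.finrank_span_image_finset {ι R M : Type*} [Ring R] [Nontrivial R]
    [StrongRankCondition R] [AddCommGroup M] [Module R M] (b : Basis ι R M) (s : Finset ι) :
    finrank R (span R (b '' s)) = s.card := by
  rw [Set.image_eq_range]
  exact (finrank_span_eq_card (b.linearIndependent.comp _ Subtype.val_injective)).trans (by simp)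

theorem OrthonormalBasis.inner_eq_zero_of_mem_span_image {ι 𝕜 E : Type*} [Fintype ι] [RCLike 𝕜]
    [NormedAddCommGroup E] [InnerProductSpace 𝕜 E] (b : OrthonormalBasis ι 𝕜 E) {s : Set ι}
    {v : E} (hv : v ∈ span 𝕜 (b '' s)) {j : ι} (hj : j ∉ s) : inner 𝕜 (b j) v = 0 := by
  rw [← b.coe_toBasis, Basis.mem_span_image] at hv
  rw [← b.repr_apply_apply, ← b.coe_toBasis_repr_apply]
  by_contra h
  exact hj (hv (Finsupp.mem_support_iff.mpr h))

namespace LinearMap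

variable {E F G : Type*} [NormedAddCommGroup E] [InnerProductSpace ℝ E] [FiniteDimensional ℝ E]
  [NormedAddCommGroup F] [InnerProductSpace ℝ F] [FiniteDimensional ℝ F]
  [NormedAddCommGroup G] [InnerProductSpace ℝ G] [FiniteDimensional ℝ G] (T : E →ₗ[ℝ] F)

noncomputable def rightSingularBasis : OrthonormalBasis (Fin (finrank ℝ E)) ℝ E :=
  T.isSymmetric_adjoint_comp_self.eigenvectorBasis rfl

theorem adjoint_comp_self_rightSingularBasis (i : Fin (finrank ℝ E)) :
    (adjoint T ∘ₗ T) (T.rightSingularBasis i) =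
      T.singularValues i ^ 2 • T.rightSingularBasis i := by
  rw [rightSingularBasis, IsSymmetric.apply_eigenvectorBasis, T.sq_singularValues_fin rfl]
  rfl

theorem norm_apply_sq_eq_sum (v : E) :
    ‖T v‖ ^ 2 = ∑ i : Fin (finrank ℝ E),
      T.singularValues i ^ 2 * inner ℝ (T.rightSingularBasis i) v ^ 2 := by
  rw [← real_inner_self_eq_norm_sq, ← adjoint_inner_left,
    ← T.rightSingularBasis.sum_inner_mul_inner]
  refine Finset.sum_congr rfl fun i _ => ?_
  rw [real_inner_comm, ← comp_apply, ← T.isSymmetric_adjoint_comp_self,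
    adjoint_comp_self_rightSingularBasis, real_inner_smul_left]
  ring

theorem norm_sq_eq_sum (v : E) :
    ‖v‖ ^ 2 = ∑ i : Fin (finrank ℝ E), inner ℝ (T.rightSingularBasis i) v ^ 2 := by
  simp [← T.rightSingularBasis.sum_sq_norm_inner_right v]

variable {T} {s : Set (Fin (finrank ℝ E))} {r : ℝ} {v : E}

theorem norm_apply_sq_le_of_mem_span (hr : ∀ j ∈ s, T.singularValues j ^ 2 ≤ r)
    (hv : v ∈ span ℝ (T.rightSingularBasis '' s)) : ‖T v‖ ^ 2 ≤ r * ‖v‖ ^ 2 := by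
  rw [norm_apply_sq_eq_sum, T.norm_sq_eq_sum, Finset.mul_sum]
  refine Finset.sum_le_sum fun j _ => ?_
  by_cases hj : j ∈ s
  · exact mul_le_mul_of_nonneg_right (hr j hj) (sq_nonneg _)
  · simp [T.rightSingularBasis.inner_eq_zero_of_mem_span_image hv hj]

theorem le_norm_apply_sq_of_mem_span (hr : ∀ j ∈ s, r ≤ T.singularValues j ^ 2)
    (hv : v ∈ span ℝ (T.rightSingularBasis '' s)) : r * ‖v‖ ^ 2 ≤ ‖T v‖ ^ 2 := by
  rw [norm_apply_sq_eq_sum, T.norm_sq_eq_sum, Finset.mul_sum]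
  refine Finset.sum_le_sum fun j _ => ?_
  by_cases hj : j ∈ s
  · exact mul_le_mul_of_nonneg_right (hr j hj) (sq_nonneg _)
  · simp [T.rightSingularBasis.inner_eq_zero_of_mem_span_image hv hj]

variable (T)

theorem le_singularValues_of_forall_mem {V : Submodule ℝ E} {i : ℕ} (hV : finrank ℝ V = i + 1)
    (hr : ∀ v ∈ V, r * ‖v‖ ≤ ‖T v‖) : r ≤ T.singularValues i := by
  have hi : i < finrank ℝ E := by have := V.finrank_le; omega
  set W := span ℝ (T.rightSingularBasis '' ↑(Finset.Ici (⟨i, hi⟩ : Fin (finrank ℝ E))))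
    with hW_def
  have hW : finrank ℝ W = finrank ℝ E - i := by
    rw [hW_def, ← T.rightSingularBasis.coe_toBasis, Basis.finrank_span_image_finset, Fin.card_Ici]
  have hVW : ¬ Disjoint V W := fun h => by
    have := Submodule.finrank_add_finrank_le_of_disjoint h
    omega
  obtain ⟨v, hvV, hvW, hv0⟩ : ∃ v ∈ V, v ∈ W ∧ v ≠ 0 := by
    simpa [Submodule.disjoint_def] using hVW
  have hupper : ‖T v‖ ≤ T.singularValues i * ‖v‖ := by
    refine (sq_le_sq₀ (norm_nonneg _)
      (mul_nonneg (T.singularValues_nonneg i) (norm_nonneg v))).mp ?_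
    rw [mul_pow]
    refine norm_apply_sq_le_of_mem_span (fun j hj => ?_) hvW
    exact pow_le_pow_left₀ (T.singularValues_nonneg _)
      (T.singularValues_antitone (Fin.le_def.mp (Finset.mem_Ici.mp (Finset.mem_coe.mp hj)))) 2
  exact le_of_mul_le_mul_right ((hr v hvV).trans hupper) (norm_pos_iff.mpr hv0)

noncomputable def topSingularSpan (k : ℕ) : Submodule ℝ E :=
  span ℝ (T.rightSingularBasis '' ({j | (j : ℕ) < k} : Finset (Fin (finrank ℝ E))))

theorem finrank_topSingularSpan {k : ℕ} (hk : k ≤ finrank ℝ E) :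
    finrank ℝ (T.topSingularSpan k) = k := by
  rw [topSingularSpan, ← T.rightSingularBasis.coe_toBasis, Basis.finrank_span_image_finset,
    Fin.card_filter_val_lt, min_eq_right hk]

theorem topSingularSpan_mono : Monotone T.topSingularSpan := fun k l hkl =>
  span_mono (Set.image_mono fun j hj => by
    simp only [Finset.coe_filter, Finset.mem_univ, true_and, Set.mem_ofPred_eq] at hj ⊢
    omega)

theorem singularValues_mul_norm_le_of_mem_topSingularSpan {i : ℕ}
    (hv : v ∈ T.topSingularSpan (i + 1)) : T.singularValues i * ‖v‖ ≤ ‖T v‖ := by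
  refine (sq_le_sq₀ (mul_nonneg (T.singularValues_nonneg i) (norm_nonneg v))
    (norm_nonneg _)).mp ?_
  rw [mul_pow]
  refine le_norm_apply_sq_of_mem_span (fun j hj => ?_) hv
  simp only [Finset.coe_filter, Finset.mem_univ, true_and] at hj
  exact pow_le_pow_left₀ (T.singularValues_nonneg _)
    (T.singularValues_antitone (Nat.lt_succ_iff.mp hj)) 2

theorem isGreatest_singularValues {i : ℕ} (hi : i < finrank ℝ E) :
    IsGreatest {r | ∃ V : Submodule ℝ E, finrank ℝ V = i + 1 ∧ ∀ v ∈ V, r * ‖v‖ ≤ ‖T v‖}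
      (T.singularValues i) :=
  ⟨⟨T.topSingularSpan (i + 1), T.finrank_topSingularSpan hi,
      fun _ hv => T.singularValues_mul_norm_le_of_mem_topSingularSpan hv⟩,
    fun _ ⟨_, hV, hr⟩ => T.le_singularValues_of_forall_mem hV hr⟩

theorem singularValues_domRestrict_le (V : Submodule ℝ E) (i : ℕ) :
    (T.domRestrict V).singularValues i ≤ T.singularValues i := by
  by_cases hi : i < finrank ℝ V
  · obtain ⟨W, hW, hWr⟩ := ((T.domRestrict V).isGreatest_singularValues hi).1
    refine T.le_singularValues_of_forall_mem (V := W.map V.subtype) ?_ ?_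
    · rw [← (Submodule.equivMapOfInjective _ V.injective_subtype W).finrank_eq, hW]
    · rintro _ ⟨w, hw, rfl⟩
      exact hWr w hw
  · rw [singularValues_of_finrank_le _ (not_lt.mp hi)]
    exact T.singularValues_nonneg i

theorem singularValues_le_singularValues_domRestrict_topSingularSpan {k i : ℕ}
    (hk : k ≤ finrank ℝ E) (hi : i < k) :
    T.singularValues i ≤ (T.domRestrict (T.topSingularSpan k)).singularValues i := by
  refine (T.domRestrict _).le_singularValues_of_forall_mem
    (V := (T.topSingularSpan (i + 1)).comap (T.topSingularSpan k).subtype) ?_ fun v hv => ?_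
  · rw [(Submodule.comapSubtypeEquivOfLe (T.topSingularSpan_mono hi)).finrank_eq,
      T.finrank_topSingularSpan (by omega)]
  · exact T.singularValues_mul_norm_le_of_mem_topSingularSpan hv

theorem normDet_domRestrict_le (V : Submodule ℝ E) :
    (T.domRestrict V).normDet ≤ ∏ i ∈ Finset.range (finrank ℝ V), T.singularValues i := by
  rw [normDet_eq_prod_singularValues]
  exact Finset.prod_le_prod (fun i _ => singularValues_nonneg _ i)
    fun i _ => T.singularValues_domRestrict_le V i

theorem prod_singularValues_le_normDet_domRestrict_topSingularSpan {k : ℕ}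
    (hk : k ≤ finrank ℝ E) :
    ∏ i ∈ Finset.range k, T.singularValues i ≤
      (T.domRestrict (T.topSingularSpan k)).normDet := by
  rw [normDet_eq_prod_singularValues, T.finrank_topSingularSpan hk]
  exact Finset.prod_le_prod (fun i _ => T.singularValues_nonneg i)
    fun i hi => T.singularValues_le_singularValues_domRestrict_topSingularSpan hk
      (Finset.mem_range.mp hi)

theorem prod_singularValues_comp_le (A : F →ₗ[ℝ] G) (B : E →ₗ[ℝ] F) {k : ℕ}
    (hk : k ≤ finrank ℝ E) :
    ∏ i ∈ Finset.range k, (A ∘ₗ B).singularValues i ≤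
      (∏ i ∈ Finset.range k, A.singularValues i) * ∏ i ∈ Finset.range k, B.singularValues i := by
  set V := (A ∘ₗ B).topSingularSpan k
  set BV := B.domRestrict V
  have hA : 0 ≤ ∏ i ∈ Finset.range k, A.singularValues i :=
    Finset.prod_nonneg fun i _ => A.singularValues_nonneg i
  have hB : 0 ≤ ∏ i ∈ Finset.range k, B.singularValues i :=
    Finset.prod_nonneg fun i _ => B.singularValues_nonneg i
  calc ∏ i ∈ Finset.range k, (A ∘ₗ B).singularValues i
      ≤ (A ∘ₗ BV).normDet :=
        (A ∘ₗ B).prod_singularValues_le_normDet_domRestrict_topSingularSpan hk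
    _ = (A.domRestrict (range BV)).normDet * BV.normDet := normDet_comp _ _
    _ ≤ _ := by
      by_cases hBV : ker BV = ⊥
      · have hrange : finrank ℝ (range BV) = k := by
          rw [finrank_range_of_inj (ker_eq_bot.mp hBV), (A ∘ₗ B).finrank_topSingularSpan hk]
        refine mul_le_mul ((A.normDet_domRestrict_le _).trans_eq (by rw [hrange]))
          ((B.normDet_domRestrict_le V).trans_eq (by rw [(A ∘ₗ B).finrank_topSingularSpan hk]))
          (normDet_nonneg _) hA
      · rw [normDet_eq_zero_iff_ker_ne_bot.mpr hBV, mul_zero]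
        exact mul_nonneg hA hB

end LinearMap

theorem Real.mul_rpow_eq_rpow_mul_mul_rpow {p x a b : ℝ} (hp : 0 ≤ p) (hx : 0 ≤ x)
    (hab : a + b = 1) : p * x ^ b = p ^ a * (p * x) ^ b := by
  rw [Real.mul_rpow hp hx, ← mul_assoc, ← Real.rpow_add' hp (by rw [hab]; exact one_ne_zero),
    hab, Real.rpow_one]

theorem Real.rpow_mul_rpow_le_mul {p q p₁ q₁ p₂ q₂ a b : ℝ} (hp : 0 ≤ p) (hq : 0 ≤ q)
    (hp₁ : 0 ≤ p₁) (hq₁ : 0 ≤ q₁) (hp₂ : 0 ≤ p₂) (hq₂ : 0 ≤ q₂) (ha : 0 ≤ a) (hb : 0 ≤ b)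
    (hpp : p ≤ p₁ * p₂) (hqq : q ≤ q₁ * q₂) :
    p ^ a * q ^ b ≤ (p₁ ^ a * q₁ ^ b) * (p₂ ^ a * q₂ ^ b) :=
  calc p ^ a * q ^ b ≤ (p₁ * p₂) ^ a * (q₁ * q₂) ^ b :=
        mul_le_mul (Real.rpow_le_rpow hp hpp ha) (Real.rpow_le_rpow hq hqq hb)
          (Real.rpow_nonneg hq b) (Real.rpow_nonneg (mul_nonneg hp₁ hp₂) a)
    _ = (p₁ ^ a * q₁ ^ b) * (p₂ ^ a * q₂ ^ b) := by
        rw [Real.mul_rpow hp₁ hp₂, Real.mul_rpow hq₁ hq₂]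
        ring

section Matrix

open Finset

variable {d : ℕ} (M : Matrix (Fin d) (Fin d) ℝ)

theorem singVal_add_one {i : ℕ} (hi : i < d) :
    singVal d M (i + 1) = (Matrix.toEuclideanLin M).singularValues i :=
  ((Matrix.toEuclideanLin M).isGreatest_singularValues
    (by rwa [finrank_euclideanSpace_fin])).csSup_eq

theorem prod_Icc_singVal {k : ℕ} (hk : k ≤ d) :
    ∏ j ∈ Icc 1 k, singVal d M j = ∏ i ∈ range k, (Matrix.toEuclideanLin M).singularValues i := by
  rw [← Ico_add_one_right_eq_Icc, range_eq_Ico, ← prod_Ico_add' _ 0 k 1]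
  exact prod_congr rfl fun i hi => singVal_add_one M ((mem_Ico.mp hi).2.trans_le hk)

theorem svf_eq_of_pos_of_le {t : ℝ} (ht : 0 < t) (htd : t ≤ d) :
    svf d M t = (∏ i ∈ range (⌈t⌉₊ - 1), (Matrix.toEuclideanLin M).singularValues i) ^
        ((⌈t⌉₊ : ℝ) - t) *
      (∏ i ∈ range ⌈t⌉₊, (Matrix.toEuclideanLin M).singularValues i) ^ (t - ⌈t⌉₊ + 1) := by
  have hl : ⌈t⌉₊ - 1 + 1 = ⌈t⌉₊ := Nat.sub_add_cancel (Nat.one_le_ceil_iff.mpr ht)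
  have hld : ⌈t⌉₊ ≤ d := Nat.ceil_le.mpr htd
  rw [svf, if_neg ht.ne', if_pos htd, prod_Icc_singVal M (by omega), ← hl,
    singVal_add_one M (by omega), prod_range_succ, hl]
  exact Real.mul_rpow_eq_rpow_mul_mul_rpow
    (prod_nonneg fun i _ => LinearMap.singularValues_nonneg _ i)
    (LinearMap.singularValues_nonneg _ _) (by ring)

theorem svf_eq_of_lt {t : ℝ} (htd : (d : ℝ) < t) :
    svf d M t = (∏ i ∈ range d, (Matrix.toEuclideanLin M).singularValues i) ^ (t / d) := by
  rw [svf, if_neg ((Nat.cast_nonneg d).trans_lt htd).ne', if_neg htd.not_ge,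
    prod_Icc_singVal M le_rfl]

end Matrix

theorem svf_submultiplicative_general (d : ℕ) (A B : Matrix (Fin d) (Fin d) ℝ)
    (t : ℝ) (ht : 0 ≤ t) :
    svf d (A * B) t ≤ svf d A t * svf d B t := by
  have horn (k : ℕ) (hk : k ≤ d) := Matrix.toLpLin_mul_same 2 A B ▸
    (Matrix.toEuclideanLin A).prod_singularValues_comp_le (Matrix.toEuclideanLin B)
      (k := k) (by rwa [finrank_euclideanSpace_fin])
  have hnonneg (M : Matrix (Fin d) (Fin d) ℝ) (k : ℕ) :
      0 ≤ ∏ i ∈ Finset.range k, (Matrix.toEuclideanLin M).singularValues i :=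
    Finset.prod_nonneg fun i _ => LinearMap.singularValues_nonneg _ i
  rcases ht.eq_or_lt with rfl | ht_pos
  · simp [svf]
  by_cases htd : t ≤ d
  · have hld : ⌈t⌉₊ ≤ d := Nat.ceil_le.mpr htd
    simp only [svf_eq_of_pos_of_le _ ht_pos htd]
    exact Real.rpow_mul_rpow_le_mul (hnonneg _ _) (hnonneg _ _) (hnonneg _ _) (hnonneg _ _)
      (hnonneg _ _) (hnonneg _ _) (by linarith [Nat.le_ceil t])
      (by linarith [Nat.ceil_lt_add_one ht]) (horn _ (by omega)) (horn _ hld)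
  · simp only [svf_eq_of_lt _ (not_le.mp htd)]
    rw [← Real.mul_rpow (hnonneg _ _) (hnonneg _ _)]
    exact Real.rpow_le_rpow (hnonneg _ _) (horn d le_rfl) (by positivity)

/-- The singular value function is submultiplicative:
`αᵗ(AB) ≤ αᵗ(A)·αᵗ(B)` for non-singular `A`, `B` and `t ≥ 0`. -/
theorem svf_submultiplicative (d : ℕ) (A B : Matrix (Fin d) (Fin d) ℝ)
    (hA : IsUnit A.det) (hB : IsUnit B.det) (t : ℝ) (ht : 0 ≤ t) :
    svf d (A * B) t ≤ svf d A t * svf d B t :=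
  svf_submultiplicative_general d A B t ht
end
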